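/- For any K-simplex S and any d_0 ≥ 0, the sublevel set {x ∈ ℝ^K : d_S(x) ≤ d_0} of the planar distance is itself a K-simplex containing S, whose facets are parallel to those of S (each facet shifted outward by distance d_0 along its unit outward normal). -/

import Mathlib

/-- The planar distance of a point to a simplex: max{0, max_k (⟨w_k, x⟩ + b_k)}. -/
noncomputable def planarDist {K : ℕ} (w : Fin (K + 1) → EuclideanSpace ℝ (Fin K))
    (b : Fin (K + 1) → ℝ) (x : EuclideanSpace ℝ (Fin K)) : ℝ :=
  max 0 (Finset.univ.sup' Finset.univ_nonempty fun k => (inner ℝ (w k) x : ℝ) + b k)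

/-!
Since `S` is bounded, no direction `v ≠ 0` has `⟪w k, v⟫ ≤ 0` for all `k`. Hence the linear map
`(c, r) ↦ (⟪w k, c⟫ + r)ₖ` from `ℝᴷ × ℝ` to `ℝᴷ⁺¹` is injective, so bijective, and there is a
point `c` at which all `K + 1` facet functionals `⟪w k, ·⟫ + b k` take one value `-r`; an interior
point of `S` forces `r > 0`. The homothety `f` about `c` of ratio `t = (r + d₀)/r` satisfies
`⟪w k, f y⟫ + b k - d₀ = t (⟪w k, y⟫ + b k)`, so it maps `S` onto the `d₀`-sublevel set, and it
maps the affinely independent vertices of `S` to affinely independent vertices of that set.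
-/

open Set Bornology Module AffineMap
open scoped RealInnerProductSpace

theorem eq_zero_of_forall_add_smul_mem {F : Type*} [NormedAddCommGroup F] [NormedSpace ℝ F]
    {s : Set F} (hs : IsBounded s) {p v : F} (h : ∀ t : ℝ, 0 ≤ t → p + t • v ∈ s) : v = 0 := by
  obtain ⟨C, hC⟩ := isBounded_iff_forall_norm_le.mp hs
  by_contra hv
  have hv : 0 < ‖v‖ := norm_pos_iff.mpr hv
  have hC0 : ‖p‖ ≤ C := by simpa using hC _ (h 0 le_rfl)
  set t := (C + ‖p‖ + 1) / ‖v‖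
  have ht : 0 ≤ t := div_nonneg (by linarith [norm_nonneg p]) hv.le
  have htv : ‖t • v‖ = C + ‖p‖ + 1 := by
    rw [norm_smul, Real.norm_of_nonneg ht, div_mul_cancel₀ _ hv.ne']
  have htri := norm_le_add_norm_add (t • v) p
  rw [add_comm (t • v)] at htri
  linarith [hC _ (h t ht)]

section Polyhedron

variable {ι E : Type*} [NormedAddCommGroup E] [InnerProductSpace ℝ E] {w : ι → E} {b : ι → ℝ}

def polyhedron (w : ι → E) (b : ι → ℝ) : Set E := {x | ∀ k, ⟪w k, x⟫ + b k ≤ 0}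

theorem polyhedron_mono {b' : ι → ℝ} (h : ∀ k, b' k ≤ b k) : polyhedron w b ⊆ polyhedron w b' :=
  fun _ hx k => by linarith [hx k, h k]

theorem eq_zero_of_forall_inner_nonpos (hP : IsBounded (polyhedron w b)) {p v : E}
    (hp : p ∈ polyhedron w b) (hv : ∀ k, ⟪w k, v⟫ ≤ 0) : v = 0 :=
  eq_zero_of_forall_add_smul_mem hP fun t ht k => by
    show ⟪w k, p + t • v⟫ + b k ≤ 0
    rw [inner_add_right, real_inner_smul_right]
    nlinarith [hp k, hv k]

theorem inner_add_neg_of_mem_interior {x : E} (hx : x ∈ interior (polyhedron w b)) {k : ι}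
    (hw : w k ≠ 0) : ⟪w k, x⟫ + b k < 0 := by
  let f := innerSL ℝ (w k)
  have hf : f ≠ 0 := fun h => hw <| by simpa [f] using congr($h (w k))
  have hsub : polyhedron w b ⊆ f ⁻¹' Iic (-b k) := fun y hy => by
    simp only [mem_preimage, mem_Iic, f, innerSL_apply_apply]; linarith [hy k]
  have := interior_mono hsub hx
  rw [← (f.isOpenMap_of_ne_zero hf).preimage_interior_eq_interior_preimage f.continuous,
    interior_Iic, mem_preimage, mem_Iio, innerSL_apply_apply] at this
  linarith

theorem exists_inner_add_eq_neg [Fintype ι] [FiniteDimensional ℝ E]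
    (hcard : Fintype.card ι = finrank ℝ E + 1) (hP : IsBounded (polyhedron w b))
    (hne : (polyhedron w b).Nonempty) : ∃ c r, ∀ k, ⟪w k, c⟫ + b k = -r := by
  obtain ⟨p, hp⟩ := hne
  have : Nonempty ι := Fintype.card_pos_iff.mp (by omega)
  let L : E × ℝ →ₗ[ℝ] ι → ℝ :=
    LinearMap.pi fun k => (innerₛₗ ℝ (w k)).comp (LinearMap.fst ℝ E ℝ) + LinearMap.snd ℝ E ℝ
  have hL : ∀ c r k, L (c, r) k = ⟪w k, c⟫ + r := fun _ _ _ => rfl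
  have hinj : Function.Injective L := by
    rw [← LinearMap.ker_eq_bot, LinearMap.ker_eq_bot']
    rintro ⟨c, r⟩ h
    have hcr : ∀ k, ⟪w k, c⟫ = -r := fun k => by
      simpa [hL, add_eq_zero_iff_eq_neg] using congr_fun h k
    have hc : c = 0 := by
      rcases le_total 0 r with hr | hr
      · exact eq_zero_of_forall_inner_nonpos hP hp fun k => by linarith [hcr k]
      · exact neg_eq_zero.mp <| eq_zero_of_forall_inner_nonpos hP hp fun k => by
          rw [inner_neg_right]; linarith [hcr k]
    obtain ⟨k⟩ := ‹Nonempty ι›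
    have hr := hcr k
    rw [hc, inner_zero_right] at hr
    exact Prod.ext hc (by rw [Prod.snd_zero]; linarith)
  have hsurj : Function.Surjective L :=
    (LinearMap.injective_iff_surjective_of_finrank_eq_finrank (by simp [hcard])).mp hinj
  obtain ⟨⟨c, r⟩, hcr⟩ := hsurj (-b)
  exact ⟨c, r, fun k => by linarith [hL c r k, congr_fun hcr k, Pi.neg_apply b k]⟩

theorem pos_of_forall_inner_add_eq_neg [Nonempty ι] (hP : IsBounded (polyhedron w b)) {c p : E}
    {r : ℝ} (hc : ∀ k, ⟪w k, c⟫ + b k = -r) (hp : ∀ k, ⟪w k, p⟫ + b k < 0) : 0 < r := by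
  by_contra! hr
  have hpc : p - c = 0 := eq_zero_of_forall_inner_nonpos hP (fun k => (hp k).le) fun k => by
    rw [inner_sub_right]; linarith [hp k, hc k]
  rw [sub_eq_zero] at hpc
  subst hpc
  obtain ⟨k⟩ := ‹Nonempty ι›
  linarith [hp k, hc k]

theorem inner_homothety_add (v c y : E) (t a : ℝ) :
    ⟪v, homothety c t y⟫ + a = t * (⟪v, y⟫ + a) + (1 - t) * (⟪v, c⟫ + a) := by
  rw [homothety_apply, vsub_eq_sub, vadd_eq_add, inner_add_right, real_inner_smul_right,
    inner_sub_right]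
  ring

theorem homothety_image_polyhedron {c : E} {r t : ℝ} (hc : ∀ k, ⟪w k, c⟫ + b k = -r) (ht : 0 < t) :
    homothety c t '' polyhedron w b = polyhedron w fun k => b k - (t - 1) * r := by
  have hval : ∀ y k, ⟪w k, homothety c t y⟫ + (b k - (t - 1) * r) = t * (⟪w k, y⟫ + b k) := by
    intro y k
    rw [← add_sub_assoc, inner_homothety_add, hc k]
    ring
  ext x
  constructor
  · rintro ⟨y, hy, rfl⟩ k
    rw [hval]
    exact mul_nonpos_of_nonneg_of_nonpos ht.le (hy k)
  · intro hx
    have hx' : homothety c t (homothety c t⁻¹ x) = x := by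
      rw [← homothety_mul_apply, mul_inv_cancel₀ ht.ne', homothety_one, id_apply]
    refine ⟨_, fun k => ?_, hx'⟩
    have := hval (homothety c t⁻¹ x) k
    rw [hx'] at this
    exact nonpos_of_mul_nonpos_right (this ▸ hx k) ht

end Polyhedron

theorem planarDist_le_iff {K : ℕ} {w : Fin (K + 1) → EuclideanSpace ℝ (Fin K)} {b : Fin (K + 1) → ℝ}
    {x : EuclideanSpace ℝ (Fin K)} {d : ℝ} (hd : 0 ≤ d) :
    planarDist w b x ≤ d ↔ x ∈ polyhedron w fun k => b k - d := by
  simp [planarDist, polyhedron, hd, ← add_sub_assoc]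

/-- The sublevel set {x : d_S(x) ≤ d₀} of the planar distance is itself a K-simplex
containing S, whose facets are those of S shifted outward by d₀ along the unit normals. -/
theorem planarDist_sublevel_is_simplex (K : ℕ)
    (w : Fin (K + 1) → EuclideanSpace ℝ (Fin K)) (b : Fin (K + 1) → ℝ)
    (hw : ∀ k, ‖w k‖ = 1)
    (S : Set (EuclideanSpace ℝ (Fin K)))
    (hS : S = {x | ∀ k, (inner ℝ (w k) x : ℝ) + b k ≤ 0})
    (hsimp : ∃ θ : Fin (K + 1) → EuclideanSpace ℝ (Fin K),
      AffineIndependent ℝ θ ∧ S = convexHull ℝ (Set.range θ))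
    (hint : (interior S).Nonempty)
    (d0 : ℝ) (hd0 : 0 ≤ d0) :
    {x | planarDist w b x ≤ d0} = {x | ∀ k, (inner ℝ (w k) x : ℝ) + (b k - d0) ≤ 0} ∧
    S ⊆ {x | planarDist w b x ≤ d0} ∧
    ∃ θ' : Fin (K + 1) → EuclideanSpace ℝ (Fin K),
      AffineIndependent ℝ θ' ∧
        {x | planarDist w b x ≤ d0} = convexHull ℝ (Set.range θ') := by
  change S = polyhedron w b at hS
  have hsub : {x | planarDist w b x ≤ d0} = polyhedron w fun k => b k - d0 :=
    ext fun _ => planarDist_le_iff hd0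
  obtain ⟨θ, hθ, hhull⟩ := hsimp
  have hbdd : IsBounded (polyhedron w b) :=
    hS ▸ hhull ▸ ((finite_range θ).isCompact_convexHull ℝ).isBounded
  obtain ⟨p, hp⟩ := hint
  rw [hS] at hp
  obtain ⟨c, r, hc⟩ := exists_inner_add_eq_neg (by simp) hbdd ⟨p, interior_subset hp⟩
  have hr : 0 < r := pos_of_forall_inner_add_eq_neg hbdd hc fun k =>
    inner_add_neg_of_mem_interior hp (norm_ne_zero_iff.mp (by simp [hw k]))
  set t := (r + d0) / r
  have himg : homothety c t '' S = {x | planarDist w b x ≤ d0} := by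
    have hshift : (t - 1) * r = d0 := by
      rw [sub_one_mul, div_mul_cancel₀ _ hr.ne', add_sub_cancel_left]
    rw [hS, homothety_image_polyhedron hc (by positivity), hshift, hsub]
  refine ⟨hsub, hsub ▸ hS ▸ polyhedron_mono fun k => by linarith, homothety c t ∘ θ,
    hθ.map' _ (homothety_injective c (by positivity)), ?_⟩
  rw [← himg, hhull, AffineMap.image_convexHull, range_comp]
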